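/- Let λx.F be a closed term such that x ∈ βΩ(F) and F is β-normalizable. Then the range of λx.F in H is infinite; in fact, letting n be the number of symbols of the β-normal form of F, the terms F[x := λx₁…λxₙ.c_k] for k ∈ ℕ are pairwise non-≃, where c_k is the Church numeral for k. -/

import Mathlib

/-! ## A de Bruijn presentation of the untyped λ-calculus -/

/-- Untyped λ-terms in de Bruijn representation. -/
inductive Lam : Type where
  | var : ℕ → Lam
  | app : Lam → Lam → Lam
  | abs : Lam → Lam
  deriving DecidableEq

namespace Lam

/-- Lifting of de Bruijn indices (cutoff `d`). -/
def lift (d : ℕ) : Lam → Lam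
  | var n => if n < d then var n else var (n + 1)
  | app a b => app (lift d a) (lift d b)
  | abs a => abs (lift (d + 1) a)

/-- Capture-avoiding substitution of `u` for the free variable `k`. -/
def subst : Lam → ℕ → Lam → Lam
  | var n, k, u => if n = k then u else if k < n then var (n - 1) else var n
  | app a b, k, u => app (subst a k u) (subst b k u)
  | abs a, k, u => abs (subst a (k + 1) (lift 0 u))

/-- One-step β-reduction `▷`. -/
inductive Step : Lam → Lam → Prop
  | beta (a b : Lam) : Step (app (abs a) b) (subst a 0 b)
  | appL {a a' : Lam} (b : Lam) : Step a a' → Step (app a b) (app a' b)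
  | appR (a : Lam) {b b' : Lam} : Step b b' → Step (app a b) (app a b')
  | abs {a a' : Lam} : Step a a' → Step (Lam.abs a) (Lam.abs a')

/-- β-reduction `▷*` : reflexive and transitive closure of `▷`. -/
def Steps : Lam → Lam → Prop := Relation.ReflTransGen Step

/-- β-normal term. -/
def Normal (t : Lam) : Prop := ∀ t', ¬ Step t t'

/-- `Free x t` : the variable `x` (de Bruijn index, seen from the root) occurs free in `t`. -/
def Free : ℕ → Lam → Prop
  | x, var n => x = n
  | x, app a b => Free x a ∨ Free x b
  | x, abs a => Free (x + 1) a

/-- Closed term. -/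
def Closed (t : Lam) : Prop := ∀ x, ¬ Free x t

/-- A variable applied to a (possibly empty) list of arguments. -/
inductive HeadVarApp : Lam → Prop
  | var (n : ℕ) : HeadVarApp (var n)
  | app {a : Lam} (b : Lam) : HeadVarApp a → HeadVarApp (app a b)

/-- Head normal forms `λx₁…λxₙ.(y t₁ … tₘ)`. -/
inductive IsHNF : Lam → Prop
  | head {t : Lam} : HeadVarApp t → IsHNF t
  | abs {a : Lam} : IsHNF a → IsHNF (Lam.abs a)

/-- A term is solvable if it β-reduces to a head normal form. -/
def Solvable (t : Lam) : Prop := ∃ h, Steps t h ∧ IsHNF h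

/-- `Ω = (λx.(x x))(λx.(x x))`. -/
def Omega : Lam := app (abs (app (var 0) (var 0))) (abs (app (var 0) (var 0)))

/-- Ω-reduction `▷_Ω` : replace an unsolvable subterm by `Ω`. -/
inductive OmegaStep : Lam → Lam → Prop
  | unsolv {t : Lam} : ¬ Solvable t → OmegaStep t Omega
  | appL {a a' : Lam} (b : Lam) : OmegaStep a a' → OmegaStep (app a b) (app a' b)
  | appR (a : Lam) {b b' : Lam} : OmegaStep b b' → OmegaStep (app a b) (app a b')
  | abs {a a' : Lam} : OmegaStep a a' → OmegaStep (Lam.abs a) (Lam.abs a')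

/-- `▷_Ω*`. -/
def OmegaSteps : Lam → Lam → Prop := Relation.ReflTransGen OmegaStep

/-- `▷_{βΩ}` : union of `▷` and `▷_Ω`. -/
def BOStep (t t' : Lam) : Prop := Step t t' ∨ OmegaStep t t'

/-- `▷_{βΩ}*`. -/
def BOSteps : Lam → Lam → Prop := Relation.ReflTransGen BOStep

/-- `u ≃ v` : equality in the λ-theory H (common `▷_{βΩ}*`-reduct). -/
def SimH (u v : Lam) : Prop := ∃ w, BOSteps u w ∧ BOSteps v w

/-- Simultaneous (parallel) substitution along `σ`. -/
def psubst (σ : ℕ → Lam) : Lam → Lam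
  | var n => σ n
  | app a b => app (psubst σ a) (psubst σ b)
  | abs a => abs (psubst (fun n => match n with | 0 => var 0 | m + 1 => lift 0 (σ m)) a)

/-- `(x V)` : the application of a head `h` to a list of arguments. -/
def mkApps (h : Lam) (as : List Lam) : Lam := as.foldl app h

/-- `U ⊑ V` : some initial segment of `V` is obtained from `U` by a substitution
followed by componentwise β-reductions. -/
def Sqsubseteq (U V : List Lam) : Prop :=
  ∃ (σ : ℕ → Lam) (W : List Lam), W <+: V ∧
    List.Forall₂ (fun u w => Steps (psubst σ u) w) U W

/-! ### Occurrences as positions -/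

/-- Directions inside a term. -/
inductive Dir : Type where
  | left | right | down
  deriving DecidableEq

/-- Positions (occurrences) in a term. -/
abbrev Pos := List Dir

/-- The subterm of `t` at position `p` (if any). -/
def subtermAt : Lam → Pos → Option Lam
  | t, [] => some t
  | app a _, Dir.left :: p => subtermAt a p
  | app _ b, Dir.right :: p => subtermAt b p
  | abs a, Dir.down :: p => subtermAt a p
  | _, _ :: _ => none

/-- Replace the subterm of `t` at position `p` by `s` (if the position exists). -/
def replaceAt : Lam → Pos → Lam → Option Lam
  | _, [], s => some s
  | app a b, Dir.left :: p, s => (replaceAt a p s).map (fun a' => app a' b)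
  | app a b, Dir.right :: p, s => (replaceAt b p s).map (fun b' => app a b')
  | abs a, Dir.down :: p, s => (replaceAt a p s).map Lam.abs
  | _, _ :: _, _ => none

/-- `OccOf x t p` : position `p` is an occurrence in `t` of the free variable `x`
(index seen from the root, hence shifted by the number of binders crossed). -/
def OccOf (x : ℕ) (t : Lam) (p : Pos) : Prop :=
  subtermAt t p = some (var (x + p.count Dir.down))

/-- `ArgOf t p V` : `V` is the maximal list of arguments, in `t`, of the occurrence
sitting at position `p`; i.e. `([] V)` is the applicative context of that occurrence. -/
def ArgOf (t : Lam) (p : Pos) (V : List Lam) : Prop :=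
  ∃ (q : Pos) (h : Lam),
    p = q ++ List.replicate V.length Dir.left ∧
    (∀ q' : Pos, q ≠ q' ++ [Dir.left]) ∧
    subtermAt t q = some (mkApps h V) ∧ subtermAt t p = some h

/-- `InArgOfOcc x t p q` : `q` is an occurrence of `x` in `t` and the position `p` lies
inside one of the elements of `Arg(x_[q], t)`. -/
def InArgOfOcc (x : ℕ) (t : Lam) (p q : Pos) : Prop :=
  OccOf x t q ∧ ∃ (r : Pos) (n : ℕ),
    q = r ++ List.replicate n Dir.left ∧
    (∀ r' : Pos, r ≠ r' ++ [Dir.left]) ∧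
    ∃ (j : ℕ) (s : Pos), j < n ∧ p = r ++ List.replicate j Dir.left ++ Dir.right :: s

/-- The occurrence `p` of `x` is pure in `t` : no other occurrence `q` of `x` in `t`
is such that `p` occurs in one of the elements of `Arg(x_[q], t)`. -/
def PureOcc (x : ℕ) (t : Lam) (p : Pos) : Prop :=
  OccOf x t p ∧ ∀ q, q ≠ p → ¬ InArgOfOcc x t p q

/-- Renaming of the free variable `y` into `x`. -/
def rename (y x : ℕ) : Lam → Lam
  | var n => if n = y then var x else var n
  | app a b => app (rename y x a) (rename y x b)
  | abs a => abs (rename (y + 1) (x + 1) a)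

/-- `Residue x u v p p'` : along some β-reduction from `u` to `v`, the occurrence `p'` of
`x` in `v` is a residue (traced copy) of the occurrence `p` of `x` in `u`.  This is
expressed by marking the occurrence `p` of `x` with a fresh variable `y` and tracing the
occurrences of `y`. -/
def Residue (x : ℕ) (u v : Lam) (p p' : Pos) : Prop :=
  ∃ (y : ℕ) (u₀ v₀ : Lam),
    ¬ Free y u ∧
    replaceAt u p (var (y + p.count Dir.down)) = some u₀ ∧
    Steps u₀ v₀ ∧ rename y x v₀ = v ∧ OccOf y v₀ p'

/-- The occurrence `p` of the free variable `0` ("x") in `G` is good with respect to the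
closed term `A` : it is pure in `G` and `u[x:=A]` is solvable for every subterm `u` of
`G` in which this occurrence occurs. -/
def GoodOcc (A G : Lam) (p : Pos) : Prop :=
  PureOcc 0 G p ∧
    ∀ (q : Pos) (u : Lam), q <+: p → subtermAt G q = some u →
      Solvable (subst u (q.count Dir.down) A)

/-! ### Miscellaneous -/

/-- A fixed effective Gödel numbering of λ-terms. -/
def code : Lam → ℕ
  | var n => Nat.pair 0 n
  | app a b => Nat.pair 1 (Nat.pair (code a) (code b))
  | abs a => Nat.pair 2 (code a)

/-- Body `f^k z` of the Church numeral. -/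
def churchBody : ℕ → Lam
  | 0 => var 0
  | k + 1 => app (var 1) (churchBody k)

/-- The Church numeral `c_k = λf λz.(f^k z)`. -/
def church (k : ℕ) : Lam := abs (abs (churchBody k))

/-- `n`-fold abstraction `λx₁…λxₙ.t`. -/
def absN : ℕ → Lam → Lam
  | 0, t => t
  | n + 1, t => abs (absN n t)

/-- Number of symbols of a term. -/
def size : Lam → ℕ
  | var _ => 1
  | app a b => size a + size b + 1
  | abs a => size a + 1

/-- Subterm relation. -/
inductive Subterm : Lam → Lam → Prop
  | refl (t : Lam) : Subterm t t
  | appL {s a : Lam} (b : Lam) : Subterm s a → Subterm s (app a b)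
  | appR (a : Lam) {s b : Lam} : Subterm s b → Subterm s (app a b)
  | abs {s a : Lam} : Subterm s a → Subterm s (Lam.abs a)

/-- `t` contains no subterm of the form `(x u)` for the free variable `x`. -/
def NoVarApp : ℕ → Lam → Prop
  | _, var _ => True
  | x, app a b => a ≠ var x ∧ NoVarApp x a ∧ NoVarApp x b
  | x, abs a => NoVarApp (x + 1) a

/-- Headed by the variable `d` : term of the form `(x V)` with `x = var d`. -/
inductive Headed : ℕ → Lam → Prop
  | var (d : ℕ) : Headed d (var d)
  | app {d : ℕ} {a : Lam} (b : Lam) : Headed d a → Headed d (app a b)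

end Lam

/-!
A β-normal form `N` of size at most `n` has no occurrence of `x` applied to `n` or more
arguments. Hence in `N[x := λx₁…λxₙ.B]`, with `B` closed and normal, every occurrence `x V`
merely contracts to `λx₁…λxₙ₋|V|.B` and no further redex is created: the result is again
β-normal and, as `x` occurs in `N`, it determines `B`. Distinct β-normal forms are distinct
in H by confluence of `▷_{βΩ}`, proved with parallel reduction and the triangle property
for the complete βΩ-development. The Ω-rule commutes with substitution because
unsolvability is stable under substitution and reflected by Ω-reduction; both follow from
the head normalization theorem, obtained from Kashima's standardization.
-/
namespace Lam

/-! ### Substitution -/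

theorem lift_lift (t : Lam) {i j : ℕ} (h : i ≤ j) :
    lift i (lift j t) = lift (j + 1) (lift i t) := by
  induction t generalizing i j with
  | var n => by_cases n < j <;> by_cases n < i <;> simp [lift, *] <;> omega
  | app a b iha ihb => simp [lift, iha h, ihb h]
  | abs a ih => simp [lift, ih (by omega : i + 1 ≤ j + 1)]

theorem subst_lift (t : Lam) (d : ℕ) (u : Lam) : subst (lift d t) d u = t := by
  induction t generalizing d u with
  | var n =>
      by_cases h : n < d
      · simp [lift, subst, h, h.ne, h.not_gt]
      · simp [lift, subst, h, show n + 1 ≠ d by omega, show d < n + 1 by omega]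
  | app a b iha ihb => simp [lift, subst, iha, ihb]
  | abs a ih => simp [lift, subst, ih]

def FreeVarsLt : ℕ → Lam → Prop
  | c, var n => n < c
  | c, app a b => FreeVarsLt c a ∧ FreeVarsLt c b
  | c, abs a => FreeVarsLt (c + 1) a

theorem FreeVarsLt.mono {c c' : ℕ} (h : c ≤ c') {t : Lam} (ht : FreeVarsLt c t) :
    FreeVarsLt c' t := by
  induction t generalizing c c' with
  | var n => simp only [FreeVarsLt] at ht ⊢; omega
  | app a b iha ihb => exact ⟨iha h ht.1, ihb h ht.2⟩
  | abs a ih => exact ih (by omega) ht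

theorem FreeVarsLt.lift_eq {c : ℕ} {t : Lam} (h : FreeVarsLt c t) {d : ℕ} (hd : c ≤ d) :
    lift d t = t := by
  induction t generalizing c d with
  | var n => simp only [FreeVarsLt] at h; simp [lift]; omega
  | app a b iha ihb => simp [lift, iha h.1 hd, ihb h.2 hd]
  | abs a ih => simp [lift, ih h (by omega : c + 1 ≤ d + 1)]

theorem FreeVarsLt.subst_eq {c : ℕ} {t : Lam} (h : FreeVarsLt c t) {k : ℕ} (hk : c ≤ k)
    (u : Lam) : subst t k u = t := by
  induction t generalizing c k u with
  | var n =>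
      simp only [FreeVarsLt] at h
      simp [subst, show n ≠ k by omega, show ¬ k < n by omega]
  | app a b iha ihb => simp [subst, iha h.1 hk, ihb h.2 hk]
  | abs a ih => simp [subst, ih h (by omega : c + 1 ≤ k + 1)]

theorem FreeVarsLt.lt_of_free {c x : ℕ} {t : Lam} (h : FreeVarsLt c t) (hx : Free x t) :
    x < c := by
  induction t generalizing c x with
  | var n => simp only [FreeVarsLt, Free] at h hx; omega
  | app a b iha ihb => exact hx.elim (iha h.1) (ihb h.2)
  | abs a ih => have := ih h hx; omega

theorem FreeVarsLt.closed {t : Lam} (h : FreeVarsLt 0 t) : Closed t :=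
  fun _ hx => Nat.not_lt_zero _ (h.lt_of_free hx)

theorem FreeVarsLt.absN {t : Lam} (h : FreeVarsLt 0 t) (n : ℕ) : FreeVarsLt 0 (absN n t) := by
  induction n with
  | zero => exact h
  | succ n ih => exact ih.mono (Nat.zero_le 1)

def up (σ : ℕ → Lam) : ℕ → Lam
  | 0 => var 0
  | m + 1 => lift 0 (σ m)

theorem psubst_abs (σ : ℕ → Lam) (a : Lam) : psubst σ (abs a) = abs (psubst (up σ) a) := by
  have : (fun n => match n with | 0 => var 0 | m + 1 => lift 0 (σ m)) = up σ := by
    funext n; cases n <;> rfl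
  simp only [psubst, this]

theorem up_iterate_of_lt (σ : ℕ → Lam) {d n : ℕ} (h : n < d) : up^[d] σ n = var n := by
  induction d generalizing n with
  | zero => omega
  | succ d ih =>
      rw [Function.iterate_succ_apply']
      cases n with
      | zero => rfl
      | succ m => simp [up, ih (by omega : m < d), lift]

theorem up_iterate_of_le (σ : ℕ → Lam) {d n : ℕ} (h : d ≤ n) :
    up^[d] σ n = (lift 0)^[d] (σ (n - d)) := by
  induction d generalizing n with
  | zero => rfl
  | succ d ih =>
      obtain ⟨m, rfl⟩ : ∃ m, n = m + 1 := ⟨n - 1, by omega⟩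
      rw [Function.iterate_succ_apply', Function.iterate_succ_apply']
      simp only [up, ih (by omega : d ≤ m), Nat.add_sub_add_right]

theorem lift_iterate_lift_zero (x : Lam) (d : ℕ) :
    lift d ((lift 0)^[d] x) = (lift 0)^[d + 1] x := by
  induction d with
  | zero => rfl
  | succ d ih =>
      rw [Function.iterate_succ_apply', ← lift_lift _ (Nat.zero_le d), ih,
        ← Function.iterate_succ_apply' (lift 0)]

theorem psubst_lift (t : Lam) (σ : ℕ → Lam) (d : ℕ) :
    psubst (up^[d] (up σ)) (lift d t) = lift d (psubst (up^[d] σ) t) := by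
  induction t generalizing d with
  | var n =>
      by_cases h : n < d
      · simp only [lift, if_pos h, psubst, up_iterate_of_lt _ h]
      · simp only [lift, if_neg h, psubst]
        rw [up_iterate_of_le _ (by omega), up_iterate_of_le _ (by omega),
          show n + 1 - d = n - d + 1 by omega, lift_iterate_lift_zero]
        simp only [up, ← Function.iterate_succ_apply (lift 0), Function.iterate_succ_apply']
  | app a b iha ihb => simp only [lift, psubst, iha, ihb]
  | abs a ih =>
      simp only [lift, psubst_abs, ← Function.iterate_succ_apply' up, ih]

theorem psubst_psubst (t : Lam) (σ τ : ℕ → Lam) :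
    psubst σ (psubst τ t) = psubst (fun n => psubst σ (τ n)) t := by
  induction t generalizing σ τ with
  | var n => rfl
  | app a b iha ihb => simp only [psubst, iha, ihb]
  | abs a ih =>
      simp only [psubst_abs, ih]
      congr 2
      funext n
      cases n with
      | zero => rfl
      | succ m => exact psubst_lift (τ m) σ 0

def substSeq (k : ℕ) (u : Lam) : ℕ → Lam :=
  fun n => if n = k then u else if k < n then var (n - 1) else var n

def liftSeq (d : ℕ) : ℕ → Lam := fun n => if n < d then var n else var (n + 1)

theorem up_substSeq (k : ℕ) (u : Lam) : up (substSeq k u) = substSeq (k + 1) (lift 0 u) := by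
  funext n
  rcases n with _ | m
  · simp [up, substSeq]
  · by_cases m = k <;> by_cases k < m <;> simp [up, substSeq, lift, *]; omega

theorem up_liftSeq (d : ℕ) : up (liftSeq d) = liftSeq (d + 1) := by
  funext n
  rcases n with _ | m
  · simp [up, liftSeq]
  · by_cases m < d <;> simp [up, liftSeq, lift, *]

theorem subst_eq_psubst (t : Lam) (k : ℕ) (u : Lam) : subst t k u = psubst (substSeq k u) t := by
  induction t generalizing k u with
  | var n => simp [subst, psubst, substSeq]
  | app a b iha ihb => simp [subst, psubst, iha, ihb]
  | abs a ih => simp only [subst, psubst_abs, ih, up_substSeq]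

theorem lift_eq_psubst (t : Lam) (d : ℕ) : lift d t = psubst (liftSeq d) t := by
  induction t generalizing d with
  | var n => simp [lift, psubst, liftSeq]
  | app a b iha ihb => simp [lift, psubst, iha, ihb]
  | abs a ih => simp only [lift, psubst_abs, ih, up_liftSeq]

theorem psubst_subst (σ : ℕ → Lam) (a b : Lam) :
    psubst σ (subst a 0 b) = subst (psubst (up σ) a) 0 (psubst σ b) := by
  simp only [subst_eq_psubst, psubst_psubst]
  congr 1
  funext n
  rcases n with _ | m
  · simp [psubst, substSeq, up]
  · simp only [substSeq, up]
    rw [← subst_eq_psubst, subst_lift]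
    simp [psubst]

theorem lift_subst (a b : Lam) (d : ℕ) :
    lift d (subst a 0 b) = subst (lift (d + 1) a) 0 (lift d b) := by
  simp only [lift_eq_psubst, psubst_subst, up_liftSeq]

theorem subst_subst (a b v : Lam) (k : ℕ) :
    subst (subst a 0 b) k v = subst (subst a (k + 1) (lift 0 v)) 0 (subst b k v) := by
  simp only [subst_eq_psubst a (k + 1), ← up_substSeq, subst_eq_psubst _ k, psubst_subst]

/-! ### β-reduction, normal forms, solvability -/

theorem Steps.app_left {a a' : Lam} (b : Lam) (h : Steps a a') : Steps (app a b) (app a' b) :=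
  Relation.ReflTransGen.lift (app · b) (fun _ _ => Step.appL b) _ _ h

theorem Steps.app_right (a : Lam) {b b' : Lam} (h : Steps b b') : Steps (app a b) (app a b') :=
  Relation.ReflTransGen.lift (app a) (fun _ _ => Step.appR a) _ _ h

theorem Steps.app {a a' b b' : Lam} (ha : Steps a a') (hb : Steps b b') :
    Steps (app a b) (app a' b') :=
  (ha.app_left b).trans (hb.app_right a')

theorem Steps.abs {a a' : Lam} (h : Steps a a') : Steps (abs a) (abs a') :=
  Relation.ReflTransGen.lift Lam.abs (fun _ _ => Step.abs) _ _ h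

theorem Step.lift {t t' : Lam} (h : Step t t') (d : ℕ) : Step (lift d t) (lift d t') := by
  induction h generalizing d with
  | beta a b =>
      rw [lift_subst]
      exact Step.beta _ _
  | appL b _ ih => exact Step.appL _ (ih d)
  | appR a _ ih => exact Step.appR _ (ih d)
  | abs _ ih => exact Step.abs (ih (d + 1))

theorem Step.subst {a a' : Lam} (h : Step a a') (k : ℕ) (b : Lam) :
    Step (subst a k b) (subst a' k b) := by
  induction h generalizing k b with
  | beta x y =>
      rw [subst_subst]
      exact Step.beta _ _
  | appL _ _ ih => exact Step.appL _ (ih k b)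
  | appR _ _ ih => exact Step.appR _ (ih k b)
  | abs _ ih => exact Step.abs (ih (k + 1) (Lam.lift 0 b))

theorem Steps.subst {a a' : Lam} (h : Steps a a') (k : ℕ) (b : Lam) :
    Steps (subst a k b) (subst a' k b) :=
  Relation.ReflTransGen.lift (Lam.subst · k b) (fun _ _ h => h.subst k b) _ _ h

theorem Normal.of_app_left {a b : Lam} (h : Normal (app a b)) : Normal a :=
  fun a' ha => h (app a' b) (Step.appL b ha)

theorem Normal.of_app_right {a b : Lam} (h : Normal (app a b)) : Normal b :=
  fun b' hb => h (app a b') (Step.appR a hb)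

theorem Normal.app_left_ne_abs {a b : Lam} (h : Normal (app a b)) (c : Lam) : a ≠ abs c := by
  rintro rfl
  exact h _ (Step.beta c b)

theorem Normal.of_abs {a : Lam} (h : Normal (abs a)) : Normal a :=
  fun a' ha => h (abs a') (Step.abs ha)

theorem Normal.app {a b : Lam} (ha : Normal a) (hb : Normal b) (hne : ∀ c, a ≠ abs c) :
    Normal (app a b) := by
  rintro _ (⟨c, _⟩ | ⟨_, h⟩ | ⟨_, h⟩)
  exacts [hne c rfl, ha _ h, hb _ h]

theorem Normal.abs {a : Lam} (ha : Normal a) : Normal (abs a) := by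
  rintro _ (_ | _ | _ | h)
  exact ha _ h

theorem Normal.var (n : ℕ) : Normal (var n) := by
  rintro _ ⟨⟩

theorem Normal.absN {t : Lam} (h : Normal t) (n : ℕ) : Normal (absN n t) := by
  induction n with
  | zero => exact h
  | succ n ih => exact ih.abs

theorem Normal.isHNF {t : Lam} (h : Normal t) : IsHNF t := by
  induction t with
  | var n => exact IsHNF.head (HeadVarApp.var n)
  | app a b iha _ =>
      cases iha h.of_app_left with
      | head ha => exact IsHNF.head (HeadVarApp.app b ha)
      | @abs c _ => exact absurd rfl (h.app_left_ne_abs c)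
  | abs a ih => exact IsHNF.abs (ih h.of_abs)

theorem Normal.solvable {t : Lam} (h : Normal t) : Solvable t :=
  ⟨t, Relation.ReflTransGen.refl, h.isHNF⟩

theorem Solvable.of_steps {t t' : Lam} (h : Steps t t') (hs : Solvable t') : Solvable t :=
  let ⟨w, hw, hh⟩ := hs
  ⟨w, h.trans hw, hh⟩

theorem Solvable.abs {a : Lam} (h : Solvable a) : Solvable (abs a) :=
  let ⟨w, hs, hh⟩ := h
  ⟨Lam.abs w, hs.abs, IsHNF.abs hh⟩

/-! ### Head reduction and the head normalization theorem -/

def headStep : Lam → Option Lam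
  | app (abs a) b => some (subst a 0 b)
  | app (app x y) b => (headStep (app x y)).map (app · b)
  | app (var _) _ => none
  | var _ => none
  | abs _ => none

def HeadSteps : Lam → Lam → Prop := Relation.ReflTransGen fun a b => headStep a = some b

theorem headStep_app {a : Lam} (h : ∀ c, a ≠ abs c) (b : Lam) :
    headStep (app a b) = (headStep a).map (app · b) := by
  cases a with
  | var n => rfl
  | app x y => rfl
  | abs c => exact absurd rfl (h c)

theorem headStep_app_left {a a' : Lam} (h : headStep a = some a') (b : Lam) :
    headStep (app a b) = some (app a' b) := by
  have hne : ∀ c, a ≠ abs c := by rintro c rfl; cases h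
  rw [headStep_app hne, h]
  rfl

theorem HeadVarApp.ne_abs {t : Lam} (h : HeadVarApp t) (c : Lam) : t ≠ abs c := by
  cases h <;> nofun

theorem HeadVarApp.headStep_eq_none {t : Lam} (h : HeadVarApp t) : headStep t = none := by
  induction h with
  | var n => rfl
  | app b ha ih => rw [headStep_app ha.ne_abs, ih]; rfl

theorem eq_abs_or_headVarApp_of_headStep_eq_none {t : Lam} (h : headStep t = none) :
    (∃ c, t = abs c) ∨ HeadVarApp t := by
  induction t with
  | var n => exact Or.inr (HeadVarApp.var n)
  | abs a _ => exact Or.inl ⟨a, rfl⟩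
  | app a b iha _ =>
      cases a with
      | abs c => cases h
      | var n => exact Or.inr (HeadVarApp.app b (HeadVarApp.var n))
      | app x y =>
          rw [headStep_app (by rintro _ ⟨⟩)] at h
          rcases iha (Option.map_eq_none_iff.mp h) with ⟨c, hc⟩ | hva
          · cases hc
          · exact Or.inr (HeadVarApp.app b hva)

theorem Step.of_headStep {t t' : Lam} (h : headStep t = some t') : Step t t' := by
  induction t generalizing t' with
  | var n => cases h
  | abs a _ => cases h
  | app a b iha _ =>
      cases a with
      | abs c => cases h; exact Step.beta c b
      | var n => cases h
      | app x y =>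
          rw [headStep_app (by rintro _ ⟨⟩)] at h
          obtain ⟨a', ha', rfl⟩ := Option.map_eq_some_iff.mp h
          exact Step.appL b (iha ha')

theorem HeadSteps.steps {t t' : Lam} (h : HeadSteps t t') : Steps t t' :=
  Relation.ReflTransGen.mono (fun _ _ => Step.of_headStep) _ _ h

theorem headStep_psubst {t t' : Lam} (σ : ℕ → Lam) (h : headStep t = some t') :
    headStep (psubst σ t) = some (psubst σ t') := by
  induction t generalizing t' with
  | var n => cases h
  | abs a _ => cases h
  | app a b iha _ =>
      cases a with
      | abs c =>
          cases h
          rw [psubst_subst]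
          rfl
      | var n => cases h
      | app x y =>
          rw [headStep_app (by rintro _ ⟨⟩)] at h
          obtain ⟨a', ha', rfl⟩ := Option.map_eq_some_iff.mp h
          exact headStep_app_left (iha ha') _

theorem HeadSteps.app_left {a a' : Lam} (h : HeadSteps a a') (b : Lam) :
    HeadSteps (app a b) (app a' b) :=
  Relation.ReflTransGen.lift (app · b) (fun _ _ hw => headStep_app_left hw b) _ _ h

theorem HeadSteps.psubst {t t' : Lam} (h : HeadSteps t t') (σ : ℕ → Lam) :
    HeadSteps (psubst σ t) (psubst σ t') :=
  Relation.ReflTransGen.lift (Lam.psubst σ) (fun _ _ => headStep_psubst σ) _ _ h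

theorem HeadSteps.subst {t t' : Lam} (h : HeadSteps t t') (k : ℕ) (u : Lam) :
    HeadSteps (subst t k u) (subst t' k u) := by
  simpa only [subst_eq_psubst] using h.psubst (substSeq k u)

theorem HeadSteps.lift {t t' : Lam} (h : HeadSteps t t') (d : ℕ) :
    HeadSteps (lift d t) (lift d t') := by
  simpa only [lift_eq_psubst] using h.psubst (liftSeq d)

theorem HeadSteps.eq_of_headStep_eq_none {t s : Lam} (h : HeadSteps t s)
    (ht : headStep t = none) : s = t := by
  rcases Relation.ReflTransGen.cases_head h with rfl | ⟨_, hw, _⟩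
  · rfl
  · rw [ht] at hw; cases hw

theorem HeadSteps.of_headStep {t t' s : Lam} (h : HeadSteps t s) (hs : headStep s = none)
    (ht : headStep t = some t') : HeadSteps t' s := by
  rcases Relation.ReflTransGen.cases_head h with rfl | ⟨c, hw, hc⟩
  · rw [hs] at ht; cases ht
  · rw [ht] at hw; cases hw; exact hc

inductive HeadSolvable : Lam → Prop
  | headVarApp {t A : Lam} : HeadSteps t A → HeadVarApp A → HeadSolvable t
  | abs {t A : Lam} : HeadSteps t (abs A) → HeadSolvable A → HeadSolvable t

theorem HeadSolvable.solvable {t : Lam} (h : HeadSolvable t) : Solvable t := by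
  induction h with
  | headVarApp h hA => exact ⟨_, h.steps, IsHNF.head hA⟩
  | abs h _ ih => exact ih.abs.of_steps h.steps

theorem HeadSolvable.of_headStep {t t' : Lam} (h : HeadSolvable t)
    (ht : headStep t = some t') : HeadSolvable t' := by
  cases h with
  | headVarApp h hA => exact .headVarApp (h.of_headStep hA.headStep_eq_none ht) hA
  | abs h hA => exact .abs (h.of_headStep rfl ht) hA

/-- Kashima's inductive presentation of standard reduction. -/
inductive StdRed : Lam → Lam → Prop
  | var {M : Lam} (x : ℕ) : HeadSteps M (var x) → StdRed M (var x)
  | app {M A B A' B' : Lam} :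
      HeadSteps M (app A B) → StdRed A A' → StdRed B B' → StdRed M (app A' B')
  | abs {M A A' : Lam} : HeadSteps M (abs A) → StdRed A A' → StdRed M (abs A')

namespace StdRed

theorem refl (M : Lam) : StdRed M M := by
  induction M with
  | var n => exact .var n .refl
  | app a b iha ihb => exact .app .refl iha ihb
  | abs a ih => exact .abs .refl ih

theorem headSteps_trans {M N L : Lam} (h : HeadSteps M N) (hst : StdRed N L) : StdRed M L := by
  cases hst with
  | var x h' => exact .var x (h.trans h')
  | app h' ha hb => exact .app (h.trans h') ha hb
  | abs h' ha => exact .abs (h.trans h') ha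

theorem lift {M M' : Lam} (h : StdRed M M') (d : ℕ) : StdRed (Lam.lift d M) (Lam.lift d M') := by
  induction h generalizing d with
  | var x h =>
      have h' := h.lift d
      by_cases hx : x < d
      · simp only [Lam.lift, if_pos hx] at h' ⊢
        exact .var x h'
      · simp only [Lam.lift, if_neg hx] at h' ⊢
        exact .var (x + 1) h'
  | app h _ _ iha ihb => exact .app (h.lift d) (iha d) (ihb d)
  | abs h _ ih => exact .abs (h.lift d) (ih (d + 1))

theorem subst {M M' : Lam} (h : StdRed M M') {N N' : Lam} (k : ℕ) (hN : StdRed N N') :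
    StdRed (Lam.subst M k N) (Lam.subst M' k N') := by
  induction h generalizing N N' k with
  | var x h =>
      have h' := h.subst k N
      by_cases hx : x = k
      · subst hx
        simp only [Lam.subst, if_true] at h' ⊢
        exact headSteps_trans h' hN
      · simp only [Lam.subst, if_neg hx] at h' ⊢
        split_ifs at h' ⊢
        exacts [.var _ h', .var _ h']
  | app h _ _ iha ihb => exact .app (h.subst k N) (iha k hN) (ihb k hN)
  | abs h _ ih => exact .abs (h.subst k N) (ih (k + 1) (hN.lift 0))

theorem step {M N N' : Lam} (h : StdRed M N) (hN : Step N N') : StdRed M N' := by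
  induction h generalizing N' with
  | var x h => cases hN
  | @app M A B A' B' h ha hb iha ihb =>
      cases hN with
      | appL b h' => exact .app h (iha h') hb
      | appR a h' => exact .app h ha (ihb h')
      | beta c b =>
          cases ha with
          | abs h₁ hc =>
              have h₂ : HeadSteps M (Lam.subst _ 0 B) := (h.trans (h₁.app_left B)).tail rfl
              exact headSteps_trans h₂ (hc.subst 0 hb)
  | abs h _ ih =>
      cases hN with
      | abs h' => exact .abs h (ih h')

theorem of_steps {M N : Lam} (h : Steps M N) : StdRed M N := by
  induction h with
  | refl => exact refl M
  | tail _ h ih => exact ih.step h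

theorem exists_headSteps_headVarApp {M H : Lam} (h : StdRed M H) (hH : HeadVarApp H) :
    ∃ A, HeadSteps M A ∧ HeadVarApp A := by
  induction h with
  | var x h => exact ⟨Lam.var x, h, HeadVarApp.var x⟩
  | @app M A B A' B' h _ _ iha _ =>
      cases hH with
      | app _ hA' =>
          obtain ⟨A₀, hA₀, hvA₀⟩ := iha hA'
          exact ⟨Lam.app A₀ B, h.trans (hA₀.app_left B), HeadVarApp.app B hvA₀⟩
  | abs _ _ _ => cases hH

theorem headSolvable {M H : Lam} (h : StdRed M H) (hH : IsHNF H) : HeadSolvable M := by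
  induction hH generalizing M with
  | head hH =>
      obtain ⟨A, hA, hvA⟩ := h.exists_headSteps_headVarApp hH
      exact .headVarApp hA hvA
  | abs _ ih =>
      cases h with
      | abs h ha => exact .abs h (ih ha)

end StdRed

/-- The head normalization theorem. -/
theorem Solvable.headSolvable {t : Lam} (h : Solvable t) : HeadSolvable t :=
  let ⟨_, hs, hH⟩ := h
  (StdRed.of_steps hs).headSolvable hH

theorem HeadSteps.exists_stuck_of_psubst {σ : ℕ → Lam} {u A : Lam}
    (h : HeadSteps (Lam.psubst σ u) A) (hA : headStep A = none) :
    ∃ W, HeadSteps u W ∧ headStep W = none ∧ HeadSteps (Lam.psubst σ W) A := by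
  generalize hX : Lam.psubst σ u = X at h
  induction h using Relation.ReflTransGen.head_induction_on generalizing u with
  | refl =>
      cases hu : headStep u with
      | none => exact ⟨u, .refl, hu, hX ▸ .refl⟩
      | some u' => rw [← hX, headStep_psubst σ hu] at hA; cases hA
  | head hw hr ih =>
      cases hu : headStep u with
      | none => exact ⟨u, .refl, hu, hX ▸ .head hw hr⟩
      | some u' =>
          rw [← hX, headStep_psubst σ hu] at hw
          cases hw
          obtain ⟨W, hW, hWs, hWA⟩ := ih rfl
          exact ⟨W, .head hu hW, hWs, hWA⟩

theorem HeadSolvable.of_psubst {σ : ℕ → Lam} {u : Lam} (h : HeadSolvable (psubst σ u)) :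
    HeadSolvable u := by
  generalize hX : psubst σ u = X at h
  induction h generalizing σ u with
  | headVarApp h hA =>
      subst hX
      obtain ⟨W, hW, hWs, hWA⟩ := h.exists_stuck_of_psubst hA.headStep_eq_none
      rcases eq_abs_or_headVarApp_of_headStep_eq_none hWs with ⟨c, rfl⟩ | hvW
      · rw [psubst_abs] at hWA
        rw [hWA.eq_of_headStep_eq_none rfl] at hA
        cases hA
      · exact .headVarApp hW hvW
  | abs h _ ih =>
      subst hX
      obtain ⟨W, hW, hWs, hWA⟩ := h.exists_stuck_of_psubst rfl
      rcases eq_abs_or_headVarApp_of_headStep_eq_none hWs with ⟨c, rfl⟩ | hvW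
      · rw [psubst_abs] at hWA
        cases hWA.eq_of_headStep_eq_none rfl
        exact .abs hW (ih rfl)
      · exact .headVarApp hW hvW

theorem Solvable.of_psubst {σ : ℕ → Lam} {u : Lam} (h : Solvable (psubst σ u)) : Solvable u :=
  h.headSolvable.of_psubst.solvable

theorem Solvable.of_subst {u : Lam} {k : ℕ} {B : Lam} (h : Solvable (subst u k B)) :
    Solvable u := by
  rw [subst_eq_psubst] at h
  exact h.of_psubst

theorem Solvable.of_lift {u : Lam} {d : ℕ} (h : Solvable (lift d u)) : Solvable u := by
  rw [lift_eq_psubst] at h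
  exact h.of_psubst

theorem Solvable.abs_of_beta {c b : Lam} (h : Solvable (app (Lam.abs c) b)) :
    Solvable (Lam.abs c) :=
  (h.headSolvable.of_headStep rfl).solvable.of_subst.abs

theorem not_headVarApp_omega : ¬ HeadVarApp Omega := by
  rintro (_ | ⟨_, ⟨⟩⟩)

/-! ### Parallel βΩ-reduction and confluence -/

inductive ParRed : Lam → Lam → Prop
  | unsolv {t : Lam} : ¬ Solvable t → ParRed t Omega
  | var (n : ℕ) : ParRed (var n) (var n)
  | app {a a' b b' : Lam} : ParRed a a' → ParRed b b' → ParRed (app a b) (app a' b')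
  | abs {a a' : Lam} : ParRed a a' → ParRed (abs a) (abs a')
  | beta {a a' b b' : Lam} : ParRed a a' → ParRed b b' → ParRed (app (abs a) b) (subst a' 0 b')

inductive ParOmega : Lam → Lam → Prop
  | unsolv {t : Lam} : ¬ Solvable t → ParOmega t Omega
  | var (n : ℕ) : ParOmega (var n) (var n)
  | app {a a' b b' : Lam} : ParOmega a a' → ParOmega b b' → ParOmega (app a b) (app a' b')
  | abs {a a' : Lam} : ParOmega a a' → ParOmega (abs a) (abs a')

theorem ParOmega.refl (t : Lam) : ParOmega t t := by
  induction t with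
  | var n => exact .var n
  | app _ _ iha ihb => exact .app iha ihb
  | abs _ ih => exact .abs ih

theorem ParRed.refl (t : Lam) : ParRed t t := by
  induction t with
  | var n => exact .var n
  | app _ _ iha ihb => exact .app iha ihb
  | abs _ ih => exact .abs ih

theorem ParOmega.parRed {t s : Lam} (h : ParOmega t s) : ParRed t s := by
  induction h with
  | unsolv h => exact .unsolv h
  | var n => exact .var n
  | app _ _ iha ihb => exact .app iha ihb
  | abs _ ih => exact .abs ih

theorem OmegaStep.parOmega {t s : Lam} (h : OmegaStep t s) : ParOmega t s := by
  induction h with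
  | unsolv h => exact .unsolv h
  | appL b _ ih => exact .app ih (.refl b)
  | appR a _ ih => exact .app (.refl a) ih
  | abs _ ih => exact .abs ih

theorem Step.parRed {t s : Lam} (h : Step t s) : ParRed t s := by
  induction h with
  | beta a b => exact .beta (.refl a) (.refl b)
  | appL b _ ih => exact .app ih (.refl b)
  | appR a _ ih => exact .app (.refl a) ih
  | abs _ ih => exact .abs ih

theorem freeVarsLt_omega : FreeVarsLt 0 Omega := by
  simp [Omega, FreeVarsLt]

theorem lift_omega (d : ℕ) : lift d Omega = Omega :=
  freeVarsLt_omega.lift_eq (Nat.zero_le d)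

theorem subst_omega (k : ℕ) (u : Lam) : subst Omega k u = Omega :=
  freeVarsLt_omega.subst_eq (Nat.zero_le k) u

theorem ParOmega.lift {t s : Lam} (h : ParOmega t s) (d : ℕ) :
    ParOmega (Lam.lift d t) (Lam.lift d s) := by
  induction h generalizing d with
  | unsolv h => rw [lift_omega]; exact .unsolv (mt Solvable.of_lift h)
  | var n => exact .refl _
  | app _ _ iha ihb => exact .app (iha d) (ihb d)
  | abs _ ih => exact .abs (ih (d + 1))

theorem ParRed.lift {t s : Lam} (h : ParRed t s) (d : ℕ) :
    ParRed (Lam.lift d t) (Lam.lift d s) := by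
  induction h generalizing d with
  | unsolv h => rw [lift_omega]; exact .unsolv (mt Solvable.of_lift h)
  | var n => exact .refl _
  | app _ _ iha ihb => exact .app (iha d) (ihb d)
  | abs _ ih => exact .abs (ih (d + 1))
  | beta _ _ iha ihb => rw [lift_subst]; exact .beta (iha (d + 1)) (ihb d)

theorem ParOmega.subst {M M' : Lam} (h : ParOmega M M') {N N' : Lam} (k : ℕ)
    (hN : ParOmega N N') : ParOmega (Lam.subst M k N) (Lam.subst M' k N') := by
  induction h generalizing N N' k with
  | unsolv h => rw [subst_omega]; exact .unsolv (mt Solvable.of_subst h)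
  | var n => simp only [Lam.subst]; split_ifs <;> first | exact hN | exact .refl _
  | app _ _ iha ihb => exact .app (iha k hN) (ihb k hN)
  | abs _ ih => exact .abs (ih (k + 1) (hN.lift 0))

theorem ParRed.subst {M M' : Lam} (h : ParRed M M') {N N' : Lam} (k : ℕ)
    (hN : ParRed N N') : ParRed (Lam.subst M k N) (Lam.subst M' k N') := by
  induction h generalizing N N' k with
  | unsolv h => rw [subst_omega]; exact .unsolv (mt Solvable.of_subst h)
  | var n => simp only [Lam.subst]; split_ifs <;> first | exact hN | exact .refl _
  | app _ _ iha ihb => exact .app (iha k hN) (ihb k hN)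
  | abs _ ih => exact .abs (ih (k + 1) (hN.lift 0))
  | beta _ _ iha ihb => rw [subst_subst]; exact .beta (iha (k + 1) (hN.lift 0)) (ihb k hN)

theorem ParRed.exists_steps_parOmega {t s : Lam} (h : ParRed t s) :
    ∃ m, Steps t m ∧ ParOmega m s := by
  induction h with
  | @unsolv t h => exact ⟨t, .refl, .unsolv h⟩
  | var n => exact ⟨Lam.var n, .refl, .var n⟩
  | app _ _ iha ihb =>
      obtain ⟨ma, hsa, hpa⟩ := iha
      obtain ⟨mb, hsb, hpb⟩ := ihb
      exact ⟨Lam.app ma mb, hsa.app hsb, .app hpa hpb⟩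
  | abs _ ih =>
      obtain ⟨m, hs, hp⟩ := ih
      exact ⟨Lam.abs m, hs.abs, .abs hp⟩
  | beta _ _ iha ihb =>
      obtain ⟨ma, hsa, hpa⟩ := iha
      obtain ⟨mb, hsb, hpb⟩ := ihb
      exact ⟨Lam.subst ma 0 mb, (hsa.abs.app hsb).tail (Step.beta ma mb), hpa.subst 0 hpb⟩

theorem HeadVarApp.of_parOmega {B A : Lam} (h : ParOmega B A) (hA : HeadVarApp A) :
    HeadVarApp B := by
  induction h with
  | unsolv _ => exact absurd hA not_headVarApp_omega
  | var n => exact hA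
  | app _ _ iha _ =>
      cases hA with
      | app _ hA => exact .app _ (iha hA)
  | abs _ _ => cases hA

/-- A head step of the Ω-reduct is matched by a head step of the term, or it is a step
`Ω ▷ Ω`. -/
theorem ParOmega.headStep {t s s' : Lam} (h : ParOmega t s) (hs : headStep s = some s') :
    (∃ t', headStep t = some t' ∧ ParOmega t' s') ∨ s' = s := by
  induction h generalizing s' with
  | unsolv _ => exact .inr (Option.some.inj hs).symm
  | var n => cases hs
  | @app a a' b b' ha hb iha _ =>
      cases a' with
      | abs c' =>
          cases hs
          cases ha with
          | @abs c _ hc => exact .inl ⟨Lam.subst c 0 b, rfl, hc.subst 0 hb⟩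
      | var v => cases hs
      | app x y =>
          rw [headStep_app (by rintro _ ⟨⟩)] at hs
          obtain ⟨a₁', ha₁', rfl⟩ := Option.map_eq_some_iff.mp hs
          rcases iha ha₁' with ⟨a₁, hwa, hpa⟩ | rfl
          · exact .inl ⟨Lam.app a₁ b, headStep_app_left hwa b, .app hpa hb⟩
          · exact .inr rfl
  | abs _ _ => cases hs

theorem ParOmega.headSteps {t s A : Lam} (h : ParOmega t s) (hs : HeadSteps s A) :
    ∃ B, HeadSteps t B ∧ ParOmega B A := by
  induction hs using Relation.ReflTransGen.head_induction_on generalizing t with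
  | refl => exact ⟨t, .refl, h⟩
  | head hw _ ih =>
      rcases h.headStep hw with ⟨t', hwt, hp⟩ | rfl
      · obtain ⟨B, hB, hpB⟩ := ih hp
        exact ⟨B, .head hwt hB, hpB⟩
      · exact ih h

theorem HeadSolvable.of_parOmega {t s : Lam} (hs : HeadSolvable s) (h : ParOmega t s) :
    HeadSolvable t := by
  induction hs generalizing t with
  | headVarApp hA hvA =>
      obtain ⟨B, hB, hpB⟩ := h.headSteps hA
      exact .headVarApp hB (hvA.of_parOmega hpB)
  | abs hA _ ih =>
      obtain ⟨B, hB, hpB⟩ := h.headSteps hA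
      cases hpB with
      | abs hp => exact .abs hB (ih hp)

theorem Solvable.of_parRed {t s : Lam} (hs : Solvable s) (h : ParRed t s) : Solvable t :=
  let ⟨_, hsteps, hp⟩ := h.exists_steps_parOmega
  (hs.headSolvable.of_parOmega hp).solvable.of_steps hsteps

open scoped Classical in
/-- The complete βΩ-development: contract every β-redex and every maximal unsolvable
subterm. -/
noncomputable def develop : Lam → Lam
  | var n => var n
  | abs a => if Solvable (abs a) then abs (develop a) else Omega
  | app (abs a) b => if Solvable (app (abs a) b) then subst (develop a) 0 (develop b) else Omega
  | app (var n) b => if Solvable (app (var n) b) then app (develop (var n)) (develop b) else Omega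
  | app (app x y) b =>
      if Solvable (app (app x y) b) then app (develop (app x y)) (develop b) else Omega

theorem develop_of_not_solvable {t : Lam} (h : ¬ Solvable t) : develop t = Omega := by
  cases t with
  | var n => exact absurd (Normal.var n).solvable h
  | abs a => simp [develop, h]
  | app a b => cases a <;> simp [develop, h]

theorem develop_abs {a : Lam} (h : Solvable (abs a)) : develop (abs a) = abs (develop a) := by
  simp [develop, h]

theorem develop_beta {a b : Lam} (h : Solvable (app (abs a) b)) :
    develop (app (abs a) b) = subst (develop a) 0 (develop b) := by
  simp [develop, h]

theorem develop_app {a b : Lam} (h : Solvable (app a b)) (hne : ∀ c, a ≠ abs c) :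
    develop (app a b) = app (develop a) (develop b) := by
  cases a with
  | var n => simp [develop, h]
  | app x y => simp [develop, h]
  | abs c => exact absurd rfl (hne c)

theorem ParRed.develop {t s : Lam} (h : ParRed t s) : ParRed s (Lam.develop t) := by
  induction h with
  | unsolv h => rw [develop_of_not_solvable h]; exact .refl Omega
  | var n => exact .var n
  | @abs a a' h ih =>
      by_cases hs : Solvable (Lam.abs a)
      · rw [develop_abs hs]; exact .abs ih
      · rw [develop_of_not_solvable hs]; exact .unsolv fun hs' => hs (hs'.of_parRed h.abs)
  | @app a a' b b' ha hb iha ihb =>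
      by_cases hs : Solvable (Lam.app a b)
      · cases a with
        | abs c =>
            rw [develop_beta hs]
            cases ha with
            | unsolv hc => exact absurd hs.abs_of_beta hc
            | abs _ =>
                rw [develop_abs hs.abs_of_beta] at iha
                cases iha with
                | abs iha => exact .beta iha ihb
        | var n => rw [develop_app hs (by rintro _ ⟨⟩)]; exact .app iha ihb
        | app x y => rw [develop_app hs (by rintro _ ⟨⟩)]; exact .app iha ihb
      · rw [develop_of_not_solvable hs]
        exact .unsolv fun hs' => hs (hs'.of_parRed (.app ha hb))
  | @beta a a' b b' ha hb iha ihb =>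
      by_cases hs : Solvable (Lam.app (Lam.abs a) b)
      · rw [develop_beta hs]; exact iha.subst 0 ihb
      · rw [develop_of_not_solvable hs]
        exact .unsolv fun hs' => hs (hs'.of_parRed (.beta ha hb))

theorem BOStep.parRed {t s : Lam} (h : BOStep t s) : ParRed t s :=
  h.elim Step.parRed fun h => h.parOmega.parRed

theorem OmegaSteps.app_left {a a' : Lam} (b : Lam) (h : OmegaSteps a a') :
    OmegaSteps (app a b) (app a' b) :=
  Relation.ReflTransGen.lift (app · b) (fun _ _ => OmegaStep.appL b) _ _ h

theorem OmegaSteps.app_right (a : Lam) {b b' : Lam} (h : OmegaSteps b b') :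
    OmegaSteps (app a b) (app a b') :=
  Relation.ReflTransGen.lift (app a) (fun _ _ => OmegaStep.appR a) _ _ h

theorem OmegaSteps.abs {a a' : Lam} (h : OmegaSteps a a') : OmegaSteps (abs a) (abs a') :=
  Relation.ReflTransGen.lift Lam.abs (fun _ _ => OmegaStep.abs) _ _ h

theorem ParOmega.omegaSteps {t s : Lam} (h : ParOmega t s) : OmegaSteps t s := by
  induction h with
  | unsolv h => exact .single (.unsolv h)
  | var n => exact .refl
  | app _ _ iha ihb => exact (iha.app_left _).trans (ihb.app_right _)
  | abs _ ih => exact ih.abs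

theorem Steps.boSteps {t s : Lam} (h : Steps t s) : BOSteps t s :=
  Relation.ReflTransGen.mono (fun _ _ => Or.inl) _ _ h

theorem OmegaSteps.boSteps {t s : Lam} (h : OmegaSteps t s) : BOSteps t s :=
  Relation.ReflTransGen.mono (fun _ _ => Or.inr) _ _ h

theorem ParRed.boSteps {t s : Lam} (h : ParRed t s) : BOSteps t s :=
  let ⟨_, hs, hp⟩ := h.exists_steps_parOmega
  hs.boSteps.trans hp.omegaSteps.boSteps

theorem boSteps_iff_reflTransGen_parRed {t s : Lam} :
    BOSteps t s ↔ Relation.ReflTransGen ParRed t s := by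
  refine ⟨Relation.ReflTransGen.mono (fun _ _ => BOStep.parRed) _ _, fun h => ?_⟩
  induction h with
  | refl => exact .refl
  | tail _ h ih => exact ih.trans h.boSteps

theorem BOSteps.church_rosser {t a b : Lam} (ha : BOSteps t a) (hb : BOSteps t b) :
    ∃ c, BOSteps a c ∧ BOSteps b c := by
  simp only [boSteps_iff_reflTransGen_parRed] at ha hb ⊢
  exact Relation.church_rosser
    (fun _ _ _ hb hc => ⟨_, .single hb.develop, .single hc.develop⟩) ha hb

theorem equivalence_simH : Equivalence SimH where
  refl t := ⟨t, .refl, .refl⟩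
  symm := fun ⟨w, h₁, h₂⟩ => ⟨w, h₂, h₁⟩
  trans := fun ⟨_, h₁, h₂⟩ ⟨_, h₃, h₄⟩ =>
    let ⟨c, hc₁, hc₂⟩ := h₂.church_rosser h₃
    ⟨c, h₁.trans hc₁, h₄.trans hc₂⟩

theorem Normal.not_omegaStep {t s : Lam} (hn : Normal t) : ¬ OmegaStep t s := by
  intro h
  induction h with
  | unsolv h => exact h hn.solvable
  | appL _ _ ih => exact ih hn.of_app_left
  | appR _ _ ih => exact ih hn.of_app_right
  | abs _ ih => exact ih hn.of_abs

theorem Normal.eq_of_boSteps {t w : Lam} (hn : Normal t) (h : BOSteps t w) : w = t := by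
  induction h with
  | refl => rfl
  | tail _ h ih =>
      subst ih
      exact h.elim (fun h => absurd h (hn _)) (fun h => absurd h hn.not_omegaStep)

theorem Normal.boSteps_of_boSteps {u w nu : Lam} (hnu : Normal nu) (hu : BOSteps u nu)
    (huw : BOSteps u w) : BOSteps w nu := by
  obtain ⟨c, hnuc, hwc⟩ := hu.church_rosser huw
  rwa [hnu.eq_of_boSteps hnuc] at hwc

theorem not_simH_of_boSteps_normal {u v nu nv : Lam} (hu : BOSteps u nu) (hv : BOSteps v nv)
    (hnu : Normal nu) (hnv : Normal nv) (hne : nu ≠ nv) : ¬ SimH u v := by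
  rintro ⟨w, huw, hvw⟩
  obtain ⟨e, hnue, hnve⟩ :=
    (hnu.boSteps_of_boSteps hu huw).church_rosser (hnv.boSteps_of_boSteps hv hvw)
  exact hne ((hnu.eq_of_boSteps hnue).symm.trans (hnv.eq_of_boSteps hnve))

/-! ### Substitution into β-normal forms -/

theorem size_pos (t : Lam) : 0 < size t := by
  cases t <;> simp [size]

def spineLen : Lam → ℕ
  | app a _ => spineLen a + 1
  | _ => 0

theorem spineLen_lt_size (t : Lam) : spineLen t < size t := by
  induction t with
  | var n => simp [spineLen, size]
  | app a b iha _ => have := size_pos b; simp only [spineLen, size]; omega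
  | abs a _ => simp [spineLen, size]

theorem absN_injective (n : ℕ) : Function.Injective (absN n) := by
  induction n with
  | zero => exact fun _ _ h => h
  | succ n ih => exact fun _ _ h => ih (abs.inj h)

theorem churchBody_injective : Function.Injective churchBody := by
  intro k k' h
  induction k generalizing k' with
  | zero => cases k' <;> simp_all [churchBody]
  | succ k ih =>
      cases k' with
      | zero => simp [churchBody] at h
      | succ k' => exact congrArg (· + 1) (ih (app.inj h).2)

theorem church_injective : Function.Injective church :=
  fun _ _ h => churchBody_injective (abs.inj (abs.inj h))

theorem freeVarsLt_church (k : ℕ) : FreeVarsLt 0 (church k) := by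
  suffices FreeVarsLt 2 (churchBody k) by simpa [church, FreeVarsLt] using this
  induction k with
  | zero => simp [churchBody, FreeVarsLt]
  | succ k ih => exact ⟨by simp [FreeVarsLt], ih⟩

theorem normal_church (k : ℕ) : Normal (church k) := by
  suffices Normal (churchBody k) from this.abs.abs
  induction k with
  | zero => exact .var 0
  | succ k ih => exact .app (.var 1) ih (by rintro _ ⟨⟩)

def appNF : Lam → Lam → Lam
  | abs u, _ => u
  | var m, w => app (var m) w
  | app x y, w => app (app x y) w

theorem appNF_of_ne_abs {a : Lam} (h : ∀ c, a ≠ abs c) (b : Lam) : appNF a b = app a b := by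
  cases a with
  | var m => rfl
  | app x y => rfl
  | abs c => exact absurd rfl (h c)

/-- The β-normal form of `t[d := λx₁…λxₙ.B]` when `t` is normal of size at most `n` and `B`
is closed and normal: an occurrence of `d` with `m < n` arguments absorbs them, leaving
`λx₁…λxₙ₋ₘ.B`, and no other redex is created. -/
def substNF (B : Lam) (n : ℕ) : ℕ → Lam → Lam
  | d, var m => if m = d then absN n B else if d < m then var (m - 1) else var m
  | d, app a b => appNF (substNF B n d a) (substNF B n d b)
  | d, abs a => abs (substNF B n (d + 1) a)

section substNF

variable {B : Lam} {n d : ℕ}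

theorem substNF_of_headed {t : Lam} (h : Headed d t) (hn : spineLen t ≤ n) :
    substNF B n d t = absN (n - spineLen t) B := by
  induction h with
  | var => simp [substNF, spineLen]
  | @app a b _ ih =>
      simp only [spineLen] at hn ⊢
      rw [substNF, ih (by omega), show n - spineLen a = n - (spineLen a + 1) + 1 by omega]
      rfl

theorem steps_substNF_of_headed (hB : FreeVarsLt 0 B) {t : Lam} (h : Headed d t)
    (hn : spineLen t ≤ n) : Steps (subst t d (absN n B)) (absN (n - spineLen t) B) := by
  induction h with
  | var => simpa [subst, spineLen] using .refl
  | @app a b _ ih =>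
      simp only [spineLen] at hn ⊢
      have hbeta : Step (app (absN (n - spineLen a) B) (subst b d (absN n B)))
          (absN (n - (spineLen a + 1)) B) := by
        rw [show n - spineLen a = n - (spineLen a + 1) + 1 by omega, absN]
        have h := Step.beta (absN (n - (spineLen a + 1)) B) (subst b d (absN n B))
        rwa [(hB.absN _).subst_eq le_rfl] at h
      exact ((ih (by omega)).app_left _).tail hbeta

theorem substNF_ne_abs {t : Lam} (hn : Normal t) (hH : ¬ Headed d t) (ht : ∀ c, t ≠ abs c) :
    ∀ c, substNF B n d t ≠ abs c := by
  induction t with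
  | var m =>
      have hm : m ≠ d := by rintro rfl; exact hH (.var m)
      simp only [substNF, if_neg hm]
      split_ifs <;> nofun
  | app a b iha _ =>
      rw [substNF, appNF_of_ne_abs (iha hn.of_app_left (fun h => hH (.app b h))
        (hn.app_left_ne_abs))]
      nofun
  | abs a _ => exact absurd rfl (ht a)

theorem substNF_app {a b : Lam} (hn : Normal (app a b)) (hH : ¬ Headed d a) :
    substNF B n d (app a b) = app (substNF B n d a) (substNF B n d b) :=
  appNF_of_ne_abs (substNF_ne_abs hn.of_app_left hH hn.app_left_ne_abs) _

theorem steps_substNF (hB : FreeVarsLt 0 B) {t : Lam} (hn : Normal t) (hs : size t ≤ n) :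
    Steps (subst t d (absN n B)) (substNF B n d t) := by
  induction t generalizing d with
  | var m =>
      have h : subst (var m) d (absN n B) = substNF B n d (var m) := by simp [subst, substNF]
      exact h ▸ .refl
  | app a b iha ihb =>
      have hlen := (spineLen_lt_size _).le.trans hs
      simp only [size] at hs
      by_cases hH : Headed d a
      · rw [substNF_of_headed (.app b hH) hlen]
        exact steps_substNF_of_headed hB (.app b hH) hlen
      · rw [substNF_app hn hH]
        exact (iha hn.of_app_left (by omega)).app (ihb hn.of_app_right (by omega))
  | abs a ih =>
      rw [subst, (hB.absN n).lift_eq le_rfl]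
      exact (ih hn.of_abs (by simp only [size] at hs; omega)).abs

theorem normal_substNF (hB : Normal B) {t : Lam} (hn : Normal t) (hs : size t ≤ n) :
    Normal (substNF B n d t) := by
  induction t generalizing d with
  | var m =>
      simp only [substNF]
      split_ifs
      exacts [hB.absN n, .var _, .var _]
  | app a b iha ihb =>
      have hlen := (spineLen_lt_size _).le.trans hs
      simp only [size] at hs
      by_cases hH : Headed d a
      · rw [substNF_of_headed (.app b hH) hlen]
        exact hB.absN _
      · rw [substNF_app hn hH]
        exact .app (iha hn.of_app_left (by omega)) (ihb hn.of_app_right (by omega))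
          (substNF_ne_abs hn.of_app_left hH hn.app_left_ne_abs)
  | abs a ih => exact (ih hn.of_abs (by simp only [size] at hs; omega)).abs

theorem substNF_ne_of_free {B' : Lam} (hBB' : B ≠ B') {t : Lam} (hn : Normal t)
    (hs : size t ≤ n) (hf : Free d t) : substNF B n d t ≠ substNF B' n d t := by
  induction t generalizing d with
  | var m =>
      obtain rfl : d = m := hf
      simpa [substNF] using (absN_injective n).ne hBB'
  | app a b iha ihb =>
      have hlen := (spineLen_lt_size _).le.trans hs
      simp only [size] at hs
      by_cases hH : Headed d a
      · rw [substNF_of_headed (.app b hH) hlen, substNF_of_headed (.app b hH) hlen]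
        exact (absN_injective _).ne hBB'
      · rw [substNF_app hn hH, substNF_app hn hH]
        intro h
        rcases hf with hf | hf
        exacts [iha hn.of_app_left (by omega) hf (app.inj h).1,
          ihb hn.of_app_right (by omega) hf (app.inj h).2]
  | abs a ih =>
      exact fun h => ih hn.of_abs (by simp only [size] at hs; omega) hf (abs.inj h)

end substNF

theorem not_simH_subst_absN {F N B B' : Lam} {n : ℕ} (hN : Steps F N) (hNnf : Normal N)
    (hfree : Free 0 N) (hn : size N ≤ n) (hB : FreeVarsLt 0 B) (hB' : FreeVarsLt 0 B')
    (hBnf : Normal B) (hB'nf : Normal B') (hBB' : B ≠ B') :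
    ¬ SimH (subst F 0 (absN n B)) (subst F 0 (absN n B')) :=
  not_simH_of_boSteps_normal
    (Steps.boSteps ((hN.subst 0 _).trans (steps_substNF hB hNnf hn)))
    (Steps.boSteps ((hN.subst 0 _).trans (steps_substNF hB' hNnf hn)))
    (normal_substNF hBnf hNnf hn) (normal_substNF hB'nf hNnf hn)
    (substNF_ne_of_free hBB' hNnf hn hfree)

end Lam

open Lam in
theorem range_infinite_of_normalizable_general (F N : Lam)
    (hxbo : ∀ t', BOSteps F t' → Free 0 t')
    (hN : Steps F N) (hNnf : Normal N) :
    (∀ k m : ℕ, k ≠ m →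
        ¬ SimH (subst F 0 (absN (size N) (church k)))
               (subst F 0 (absN (size N) (church m)))) ∧
    (Set.range fun u : {u : Lam // Closed u} =>
        Quot.mk SimH (subst F 0 u.1)).Infinite := by
  have hne : ∀ k m : ℕ, k ≠ m → ¬ SimH (subst F 0 (absN (size N) (church k)))
      (subst F 0 (absN (size N) (church m))) := fun k m hkm =>
    not_simH_subst_absN hN hNnf (hxbo N hN.boSteps) le_rfl (freeVarsLt_church k)
      (freeVarsLt_church m) (normal_church k) (normal_church m) (church_injective.ne hkm)
  refine ⟨hne, Set.infinite_of_injective_forall_mem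
    (f := fun k => Quot.mk SimH (subst F 0 (absN (size N) (church k)))) ?_ ?_⟩
  · intro k m h
    by_contra hkm
    exact hne k m hkm (equivalence_simH.eqvGen_iff.mp (Quot.eqvGen_exact h))
  · exact fun k => ⟨⟨_, ((freeVarsLt_church k).absN _).closed⟩, rfl⟩

open Lam in
/-- if `λx.F` is closed, `x ∈ βΩ(F)` and `F` is β-normalizable with
β-normal form `N`, then the terms `F[x := λx₁…λxₙ.c_k]` (`n` the number of symbols of
`N`, `c_k` the Church numeral for `k`) are pairwise non-`≃`; hence the range of `λx.F`
in H is infinite. -/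
theorem range_infinite_of_normalizable (F N : Lam)
    (hcl : Closed (Lam.abs F))
    (hxbo : ∀ t', BOSteps F t' → Free 0 t')
    (hN : Steps F N) (hNnf : Normal N) :
    (∀ k m : ℕ, k ≠ m →
        ¬ SimH (subst F 0 (absN (size N) (church k)))
               (subst F 0 (absN (size N) (church m)))) ∧
    (Set.range fun u : {u : Lam // Closed u} =>
        Quot.mk SimH (subst F 0 u.1)).Infinite :=
  range_infinite_of_normalizable_general F N hxbo hN hNnf
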